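/- arXiv:1604.06151 — 2 statements merged into one kernel-verified Lean document; each statement's English description precedes it below -/
import Mathlib

section
/- Let K = diag(1, 1/η) with 0 < η ≤ 1, and let H ∈ ℂ^{2×M}, Q ⪰ 0. Then log det(I₂ + K⁻¹HQH*) ≥ log det(I₂ + HQH*) + log η. -/
open Matrix ComplexOrder

/-!
The determinant is affine in the second row, the only row that `diag(1, η)` scales, so
`det(I + diag(1, η) A) = η det(I + A) + (1 - η)(1 + A₀₀)`. For `A = H Q Hᴴ ⪰ 0` the correction
term is nonnegative and `det(I + A) > 0`, so the claim follows by taking `log₂`.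
-/

theorem Matrix.det_one_add_diagonal_mul_fin_two {R : Type*} [CommRing R]
    (A : Matrix (Fin 2) (Fin 2) R) (d : R) :
    (1 + diagonal ![1, d] * A).det = d * (1 + A).det + (1 - d) * (1 + A 0 0) := by
  simp [det_fin_two]
  ring

theorem Matrix.PosSemidef.det_mul_le_det_one_add_diagonal_mul_fin_two
    {A : Matrix (Fin 2) (Fin 2) ℂ} (hA : A.PosSemidef) {d : ℝ} (hd : d ≤ 1) :
    (d : ℂ) * (1 + A).det ≤ (1 + diagonal ![1, (d : ℂ)] * A).det := by
  rw [det_one_add_diagonal_mul_fin_two]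
  refine le_add_of_nonneg_right (mul_nonneg ?_ (add_nonneg zero_le_one hA.diag_nonneg))
  exact_mod_cast sub_nonneg.mpr hd

/-- With `K = diag(1, 1/η)`, `0 < η ≤ 1`, `H ∈ ℂ^{2×M}` and `Q ⪰ 0`:
`log₂ det(I₂ + K⁻¹ H Q Hᴴ) ≥ log₂ det(I₂ + H Q Hᴴ) + log₂ η`. -/
theorem logdet_Kinv_ge (M : ℕ) (H : Matrix (Fin 2) (Fin M) ℂ)
    (Q : Matrix (Fin M) (Fin M) ℂ) (hQ : Q.PosSemidef)
    (η : ℝ) (hη0 : 0 < η) (hη1 : η ≤ 1) :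
    Real.logb 2 ((1 + Matrix.diagonal ![1, (η : ℂ)] * (H * Q * H.conjTranspose)).det).re ≥
      Real.logb 2 ((1 + H * Q * H.conjTranspose).det).re + Real.logb 2 η := by
  have hA : (H * Q * H.conjTranspose).PosSemidef := hQ.mul_mul_conjTranspose_same H
  have hdet_pos : 0 < (1 + H * Q * H.conjTranspose).det.re :=
    (Complex.pos_iff.mp (PosDef.one.add_posSemidef hA).det_pos).1
  have hle := Complex.re_le_re (hA.det_mul_le_det_one_add_diagonal_mul_fin_two hη1)
  rw [Complex.re_ofReal_mul] at hle
  calc Real.logb 2 ((1 + H * Q * H.conjTranspose).det).re + Real.logb 2 η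
      = Real.logb 2 (η * (1 + H * Q * H.conjTranspose).det.re) := by
        rw [Real.logb_mul hη0.ne' hdet_pos.ne', add_comm]
    _ ≤ _ := Real.logb_le_logb_of_le (by norm_num) (by positivity) hle
end

section
/- Every chordal graph is perfect: for every induced subgraph of a chordal graph, the chromatic number equals the clique number. -/
/-!
Dirac's argument. Let `a` be a vertex that is not adjacent to some `b ≠ a`, and let `C` be the
component of `b` in `G - N[a]`. The vertices outside `C` with a neighbour in `C` all lie in `N(a)`,
and in a chordal graph they form a clique: for two of them `x, y`, a chordless `x`–`y` path through
`C` closes up with `a` into a cycle whose only possible chord is `xy`. Induction on the graph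
induced by `C` and its boundary yields a simplicial vertex in `C`, i.e. one not adjacent to `a`.
A simplicial vertex has fewer neighbours than the clique number, so removing it, colouring the rest
by induction and giving it a free colour colours `G` with `ω(G)` colours.
-/

/-- A graph is chordal if every cycle of length greater than three has a
chord: an edge of the graph joining two non-consecutive vertices of the
cycle (and which is not the closing edge of the cycle). -/
def SimpleGraph.IsChordal {V : Type*} (G : SimpleGraph V) : Prop :=
  ∀ ⦃v : V⦄ (c : G.Walk v v), c.IsCycle → 3 < c.length →
    ∃ i j : ℕ, i + 1 < j ∧ j < c.length ∧ ¬(i = 0 ∧ j + 1 = c.length) ∧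
      G.Adj (c.getVert i) (c.getVert j)

namespace SimpleGraph

variable {V : Type*} {G : SimpleGraph V}

namespace Walk

lemma not_adj_getVert_of_length_eq_dist {u v : V} {p : G.Walk u v}
    (hp : p.length = G.dist u v) {i j : ℕ} (hij : i + 1 < j) (hj : j ≤ p.length) :
    ¬G.Adj (p.getVert i) (p.getVert j) := fun hadj => by
  have := G.dist_le ((p.take i).append (cons hadj (p.drop j)))
  simp only [length_append, take_length, length_cons, drop_length] at this
  omega

lemma mem_of_mem_support_map_induce {s : Set V} {u v : s} (q : (G.induce s).Walk u v) {x : V}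
    (hx : x ∈ (q.map (Embedding.induce s).toHom).support) : x ∈ s := by
  rw [support_map, List.mem_map] at hx
  obtain ⟨x, -, rfl⟩ := hx
  exact x.2

lemma exists_chordless_path_of_support_subset {s : Set V} {u v : V} (w : G.Walk u v)
    (hw : ∀ x ∈ w.support, x ∈ s) :
    ∃ p : G.Walk u v, p.IsPath ∧ (∀ x ∈ p.support, x ∈ s) ∧
      ∀ i j, i + 1 < j → j ≤ p.length → ¬G.Adj (p.getVert i) (p.getVert j) := by
  obtain ⟨q, hq, hlen⟩ := (w.induce s hw).reachable.exists_path_of_dist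
  let f := (Embedding.induce (G := G) s).toHom
  have hchordless : ∀ i j, i + 1 < j → j ≤ (q.map f).length →
      ¬G.Adj ((q.map f).getVert i) ((q.map f).getVert j) := by
    intro i j hij hj
    rw [length_map] at hj
    rw [getVert_map, getVert_map]
    exact not_adj_getVert_of_length_eq_dist hlen hij hj
  exact ⟨q.map f, hq.map Subtype.val_injective, fun _ => q.mem_of_mem_support_map_induce,
    hchordless⟩

end Walk

theorem IsChordal.comap {W : Type*} {H : SimpleGraph W} (f : G ↪g H) (h : H.IsChordal) :
    G.IsChordal := by
  intro v c hc hlen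
  obtain ⟨i, j, hij, hj, hnot, hadj⟩ :=
    h (c.map f.toHom) ((Walk.isCycle_map_iff_of_injective f.injective).2 hc) (by simpa)
  rw [Walk.getVert_map, Walk.getVert_map] at hadj
  exact ⟨i, j, hij, by simpa using hj, by simpa using hnot, f.map_adj_iff.1 hadj⟩

theorem IsChordal.length_le_one_of_chordless_path (hG : G.IsChordal) {a x y : V}
    {p : G.Walk x y} (hp : p.IsPath)
    (hchordless : ∀ i j, i + 1 < j → j ≤ p.length → ¬G.Adj (p.getVert i) (p.getVert j))
    (ha : a ∉ p.support) (hax : G.Adj a x) (hay : G.Adj a y)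
    (hinner : ∀ i, 0 < i → i < p.length → ¬G.Adj a (p.getVert i)) : p.length ≤ 1 := by
  by_contra! hlen
  have hxy : x ≠ y := fun h => by
    have := hp.getVert_injOn (by simp : 0 ≤ p.length) (le_refl p.length)
      (by rw [Walk.getVert_zero, Walk.getVert_length, h])
    omega
  let c : G.Walk a a := .cons hax (p.concat hay.symm)
  have hc : c.IsCycle := by
    refine (Walk.cons_isCycle_iff _ _).2 ⟨hp.concat ha _, ?_⟩
    rw [Walk.edges_concat, List.concat_eq_append, List.mem_append, List.mem_singleton, not_or]
    refine ⟨fun h => ha (p.fst_mem_support_of_mem_edges h), fun h => ?_⟩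
    rcases Sym2.eq_iff.1 h with ⟨rfl, -⟩ | ⟨-, rfl⟩
    · exact ha p.end_mem_support
    · exact hxy rfl
  have hcv : ∀ k ≤ p.length, c.getVert (k + 1) = p.getVert k := by
    intro k hk
    rw [Walk.getVert_cons_succ, Walk.concat_eq_append, Walk.getVert_append]
    split_ifs with hk'
    · rfl
    · rw [show k = p.length by omega, Walk.getVert_length, Nat.sub_self, Walk.getVert_zero]
  obtain ⟨i, j, hij, hj, hnot, hadj⟩ :=
    hG c hc (by simp only [c, Walk.length_cons, Walk.length_concat]; omega)
  simp only [c, Walk.length_cons, Walk.length_concat] at hj hnot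
  obtain ⟨j, rfl⟩ : ∃ j', j = j' + 1 := ⟨j - 1, by omega⟩
  rw [hcv j (by omega)] at hadj
  rcases i with _ | i
  · exact hinner j (by omega) (by omega) hadj
  · rw [hcv i (by omega)] at hadj
    exact hchordless i j (by omega) (by omega) hadj

theorem IsChordal.isClique_separator (hG : G.IsChordal) {C : Set V}
    (hC : (G.induce C).Preconnected) {a : V} (ha : a ∉ C) (haC : ∀ c ∈ C, ¬G.Adj a c) :
    G.IsClique {x | x ∉ C ∧ G.Adj a x ∧ ∃ c ∈ C, G.Adj x c} := by
  rintro x ⟨hxC, hax, cx, hcx, hxcx⟩ y ⟨hyC, hay, cy, hcy, hycy⟩ hxy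
  obtain ⟨r⟩ := hC ⟨cx, hcx⟩ ⟨cy, hcy⟩
  obtain ⟨r', hr'⟩ : ∃ r' : G.Walk cx cy, ∀ z ∈ r'.support, z ∈ C :=
    ⟨_, fun _ => r.mem_of_mem_support_map_induce⟩
  let w : G.Walk x y := .cons hxcx (r'.concat hycy.symm)
  have hw : ∀ z ∈ w.support, z ∈ insert x (insert y C) := by
    intro z hz
    rw [Walk.support_cons, Walk.support_concat, List.mem_cons, List.mem_append,
      List.mem_singleton] at hz
    rcases hz with rfl | hz | rfl
    · exact Set.mem_insert _ _
    · exact Or.inr (Or.inr (hr' z hz))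
    · exact Or.inr (Or.inl rfl)
  obtain ⟨p, hp, hpT, hchordless⟩ := w.exists_chordless_path_of_support_subset hw
  have hinner : ∀ i, 0 < i → i < p.length → p.getVert i ∈ C := by
    intro i hi hil
    rcases hpT _ (p.getVert_mem_support i) with hx | hy | hc
    · have := hp.getVert_injOn (show i ∈ {i | i ≤ p.length} from hil.le)
        (show 0 ∈ {i | i ≤ p.length} from p.length.zero_le) (by rw [hx, Walk.getVert_zero])
      omega
    · have := hp.getVert_injOn (show i ∈ {i | i ≤ p.length} from hil.le)
        (show p.length ∈ {i | i ≤ p.length} from le_refl p.length)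
        (by rw [hy, Walk.getVert_length])
      omega
    · exact hc
  have hap : a ∉ p.support := by
    intro hp'
    rcases hpT a hp' with rfl | rfl | hc
    · exact hax.ne rfl
    · exact hay.ne rfl
    · exact ha hc
  have hlen := hG.length_le_one_of_chordless_path hp hchordless hap hax hay
    fun i hi hil => haC _ (hinner i hi hil)
  have hlen1 : p.length = 1 := by
    have : p.length ≠ 0 := fun h => hxy (Walk.eq_of_length_eq_zero h)
    omega
  simpa [Walk.getVert_zero, ← hlen1, Walk.getVert_length] using
    p.adj_getVert_succ (i := 0) (by omega)

def reachableAvoiding (G : SimpleGraph V) (K : Set V) (b : V) : Set V :=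
  {v | ∃ w : G.Walk b v, ∀ z ∈ w.support, z ∉ K}

section reachableAvoiding

variable {K : Set V} {b v u : V}

lemma mem_reachableAvoiding_self (hb : b ∉ K) : b ∈ G.reachableAvoiding K b :=
  ⟨.nil, by simpa using hb⟩

lemma notMem_of_mem_reachableAvoiding (hv : v ∈ G.reachableAvoiding K b) : v ∉ K :=
  let ⟨w, hw⟩ := hv; hw v w.end_mem_support

lemma mem_reachableAvoiding_of_adj (hv : v ∈ G.reachableAvoiding K b) (hvu : G.Adj v u)
    (hu : u ∉ K) : u ∈ G.reachableAvoiding K b := by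
  obtain ⟨w, hw⟩ := hv
  refine ⟨w.concat hvu, fun z hz => ?_⟩
  rw [Walk.support_concat, List.mem_append, List.mem_singleton] at hz
  rcases hz with hz | rfl
  exacts [hw z hz, hu]

lemma connected_induce_reachableAvoiding (hb : b ∉ K) :
    (G.induce (G.reachableAvoiding K b)).Connected := by
  classical
  refine induce_connected_of_patches b (mem_reachableAvoiding_self hb) fun {v} ⟨w, hw⟩ => ?_
  refine ⟨{z | z ∈ w.support}, fun z hz => ?_, w.start_mem_support, w.end_mem_support,
    w.connected_induce_support.preconnected _ _⟩
  exact ⟨w.takeUntil z hz, fun y hy => hw y (w.support_takeUntil_subset_support hz hy)⟩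

lemma not_adj_of_mem_reachableAvoiding_insert_neighborSet {a c : V}
    (hc : c ∈ G.reachableAvoiding (insert a (G.neighborSet a)) b) : ¬G.Adj a c :=
  fun hac => notMem_of_mem_reachableAvoiding hc (Or.inr hac)

theorem IsChordal.isClique_boundary_reachableAvoiding (hG : G.IsChordal) {a : V}
    (hb : b ∉ insert a (G.neighborSet a)) :
    G.IsClique {x | x ∉ G.reachableAvoiding (insert a (G.neighborSet a)) b ∧
      ∃ c ∈ G.reachableAvoiding (insert a (G.neighborSet a)) b, G.Adj x c} := by
  have haC : ∀ c ∈ G.reachableAvoiding (insert a (G.neighborSet a)) b, ¬G.Adj a c :=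
    fun c hc => not_adj_of_mem_reachableAvoiding_insert_neighborSet hc
  refine (hG.isClique_separator (connected_induce_reachableAvoiding hb).preconnected
    (fun ha => notMem_of_mem_reachableAvoiding ha (Set.mem_insert _ _)) haC).subset ?_
  rintro x ⟨hxC, c, hc, hxc⟩
  obtain rfl | hax : x ∈ insert a (G.neighborSet a) := by_contra fun hxK =>
    hxC (mem_reachableAvoiding_of_adj hc hxc.symm hxK)
  · exact absurd hxc (haC c hc)
  · exact ⟨hxC, hax, c, hc, hxc⟩

end reachableAvoiding

def IsSimplicial (G : SimpleGraph V) (v : V) : Prop :=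
  G.IsClique (G.neighborSet v)

lemma IsSimplicial.of_induce {U : Set V} {v : V} (hv : v ∈ U) (hU : G.neighborSet v ⊆ U)
    (h : (G.induce U).IsSimplicial ⟨v, hv⟩) : G.IsSimplicial v :=
  fun x hx y hy hxy => h (x := ⟨x, hU hx⟩) hx (y := ⟨y, hU hy⟩) hy (by simpa using hxy)

lemma IsSimplicial.degree_lt_cliqueNum [Finite V] {v : V} [Fintype (G.neighborSet v)]
    (hv : G.IsSimplicial v) : G.degree v < G.cliqueNum := by
  classical
  have hclique : G.IsClique (insert v (G.neighborFinset v) : Finset V) := by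
    rw [Finset.coe_insert, coe_neighborFinset]
    exact hv.insert fun u hu _ => hu
  have := hclique.card_le_cliqueNum
  rwa [Finset.card_insert_of_notMem (by simp), card_neighborFinset_eq_degree,
    Nat.add_one_le_iff] at this

theorem IsChordal.exists_isSimplicial_not_adj [Finite V] (hG : G.IsChordal) {a b : V}
    (hab : a ≠ b) (hnadj : ¬G.Adj a b) : ∃ v, v ≠ a ∧ ¬G.Adj a v ∧ G.IsSimplicial v := by
  induction hn : Nat.card V using Nat.strong_induction_on generalizing V with
  | _ n ih =>
  have hb : b ∉ insert a (G.neighborSet a) := by simp [hnadj, hab.symm]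
  set C := G.reachableAvoiding (insert a (G.neighborSet a)) b
  set U : Set V := {u | u ∈ C ∨ ∃ c ∈ C, G.Adj u c}
  have haU : a ∉ U := by
    rintro (haC | ⟨c, hc, hac⟩)
    exacts [notMem_of_mem_reachableAvoiding haC (Set.mem_insert _ _),
      not_adj_of_mem_reachableAvoiding_insert_neighborSet hc hac]
  have ihU : ∀ p q : U, p ≠ q → ¬(G.induce U).Adj p q →
      ∃ v, v ≠ p ∧ ¬(G.induce U).Adj p v ∧ (G.induce U).IsSimplicial v :=
    fun p q hpq hnpq => ih _ (hn ▸ Finite.card_subtype_lt haU) (hG.comap (Embedding.induce U))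
      hpq hnpq rfl
  obtain ⟨v, hvC, hv⟩ : ∃ v : U, v.1 ∈ C ∧ (G.induce U).IsSimplicial v := by
    by_cases hcomplete : ∀ p q : U, p ≠ q → (G.induce U).Adj p q
    · exact ⟨⟨b, Or.inl (mem_reachableAvoiding_self hb)⟩, mem_reachableAvoiding_self hb,
        fun x _ y _ hxy => hcomplete x y hxy⟩
    push Not at hcomplete
    obtain ⟨p, q, hpq, hnpq⟩ := hcomplete
    obtain ⟨v, hvp, hnpv, hv⟩ := ihU p q hpq hnpq
    by_cases hvC : v.1 ∈ C
    · exact ⟨v, hvC, hv⟩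
    -- `v` is on the boundary clique `U \ C` yet not adjacent to `p`, so the simplicial vertex
    -- missing `v` cannot be on the boundary.
    obtain ⟨v', hv'v, hnvv', hv'⟩ := ihU v p hvp (fun h => hnpv h.symm)
    refine ⟨v', by_contra fun hv'C => hnvv' ?_, hv'⟩
    exact hG.isClique_boundary_reachableAvoiding hb ⟨hvC, v.2.resolve_left hvC⟩
      ⟨hv'C, v'.2.resolve_left hv'C⟩ fun h => hv'v (Subtype.ext h).symm
  exact ⟨v, fun h => haU (h ▸ v.2), not_adj_of_mem_reachableAvoiding_insert_neighborSet hvC,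
    hv.of_induce v.2 fun u hu => Or.inr ⟨v, hvC, G.adj_symm hu⟩⟩

theorem IsChordal.exists_isSimplicial [Finite V] [Nonempty V] (hG : G.IsChordal) :
    ∃ v, G.IsSimplicial v := by
  by_cases h : ∃ a b, a ≠ b ∧ ¬G.Adj a b
  · obtain ⟨a, b, hab, hnadj⟩ := h
    obtain ⟨v, -, -, hv⟩ := hG.exists_isSimplicial_not_adj hab hnadj
    exact ⟨v, hv⟩
  · push Not at h
    exact ⟨Classical.arbitrary V, fun x _ y _ hxy => h x y hxy⟩

lemma colorable_of_induce_compl_singleton {v : V} [Fintype (G.neighborSet v)] {n : ℕ}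
    (hv : G.degree v < n) (h : (G.induce {v}ᶜ).Colorable n) : G.Colorable n := by
  classical
  obtain ⟨C⟩ := h
  let used : Finset (Fin n) :=
    Finset.univ.image fun u : G.neighborSet v => C ⟨u, (G.ne_of_adj u.2).symm⟩
  obtain ⟨c, hc⟩ : ∃ c, c ∉ used := by
    by_contra! hall
    have : used.card ≤ G.degree v := by
      rw [← card_neighborSet_eq_degree]; exact Finset.card_image_le
    rw [Finset.eq_univ_of_forall hall, Finset.card_univ, Fintype.card_fin] at this
    omega
  refine ⟨Coloring.mk (fun u => if hu : u = v then c else C ⟨u, hu⟩) fun {x y} hxy => ?_⟩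
  have hused : ∀ u (hu : G.Adj v u), C ⟨u, (G.ne_of_adj hu).symm⟩ ∈ used :=
    fun u hu => Finset.mem_image_of_mem _ (Finset.mem_univ (⟨u, hu⟩ : G.neighborSet v))
  split_ifs with hx hy hy
  · exact absurd (hx.trans hy.symm) hxy.ne
  · subst hx; exact fun h => hc (h ▸ hused y hxy)
  · subst hy; exact fun h => hc (h ▸ hused x hxy.symm)
  · exact C.valid (by simpa using hxy)

theorem IsChordal.colorable_cliqueNum [Finite V] (hG : G.IsChordal) :
    G.Colorable G.cliqueNum := by
  induction hn : Nat.card V using Nat.strong_induction_on generalizing V with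
  | _ n ih =>
  rcases isEmpty_or_nonempty V with hV | hV
  · exact .of_isEmpty _
  classical
  have := Fintype.ofFinite V
  obtain ⟨v, hv⟩ := hG.exists_isSimplicial
  refine colorable_of_induce_compl_singleton hv.degree_lt_cliqueNum ?_
  have hcard : Nat.card ({v}ᶜ : Set V) < n :=
    hn ▸ Finite.card_subtype_lt (p := (· ∈ ({v}ᶜ : Set V))) (x := v) (by simp)
  exact (ih _ hcard (hG.comap (Embedding.induce _)) rfl).mono (G.cliqueNum_induce_le _)

end SimpleGraph

/-- Every chordal graph is perfect: for every induced subgraph of a chordal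
graph, the chromatic number equals the clique number. -/
theorem chordal_is_perfect {V : Type*} [Fintype V] (G : SimpleGraph V)
    (h : G.IsChordal) :
    ∀ s : Set V, (G.induce s).chromaticNumber = ((G.induce s).cliqueNum : ℕ∞) := fun s =>
  le_antisymm (h.comap (SimpleGraph.Embedding.induce s)).colorable_cliqueNum.chromaticNumber_le
    (G.induce s).cliqueNum_le_chromaticNumber
end
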